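/- arXiv:2402.18273 — 5 statements merged into one kernel-verified Lean document; each statement's English description precedes it below -/
import Mathlib

section
/- Let A = (A_1, A_2) ∈ ℕ², gcd(A_1, A_2) = 1, and let p(x,y) = φ_1^A(x,y) be an A-quasi-homogeneous form with terms a_i x^{α_i} y^{β_i}, a_i ≠ 0, α_1 > ... > α_s ≥ 0, and characteristic polynomial g(u) = Σ a_i u^{v_i} (so p(x,y) = x^{α_1} y^{β_1} g(x^{−A_2} y^{A_1}) for x ≠ 0). Then p is non-negative on ℝ² if and only if: (1) a_1 > 0, a_s > 0, and α_1, β_1, α_s, β_s are all even; and (2) g(u) ≥ 0 for all u ∈ ℝ. -/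
open Finset Filter Set

private lemma aux_limit {s : ℕ} (c : Fin s → ℝ) (n : Fin s → ℕ)
    (h : ∀ t : ℝ, 0 < t → 0 ≤ ∑ i, c i * t ^ n i) :
    0 ≤ ∑ i, c i * (0:ℝ) ^ n i := by
  have hcont : Continuous (fun t : ℝ => ∑ i, c i * t ^ n i) := by
    apply continuous_finset_sum
    intro i _
    exact continuous_const.mul (continuous_pow _)
  have htend : Tendsto (fun t : ℝ => ∑ i, c i * t ^ n i) (nhdsWithin 0 (Set.Ioi 0))
      (nhds (∑ i, c i * (0:ℝ) ^ n i)) :=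
    (hcont.tendsto 0).mono_left nhdsWithin_le_nhds
  exact ge_of_tendsto htend (eventually_nhdsWithin_of_forall (fun t ht => h t ht))

/-- Assertion 1: An A-quasi-homogeneous form
`p(x,y) = Σ aᵢ x^{αᵢ} y^{βᵢ}` (with `A ∈ ℕ²`, `gcd(A₁,A₂)=1`, `aᵢ ≠ 0`,
`α₁ > ... > α_s ≥ 0`, `(αᵢ,βᵢ) = (α₁ − vᵢA₂, β₁ + vᵢA₁)`) is non-negative on ℝ²
iff `a₁ > 0`, `a_s > 0`, `α₁, β₁, α_s, β_s` are all even, and the characteristic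
polynomial `g(u) = Σ aᵢ u^{vᵢ}` is non-negative on ℝ. -/
theorem stmt_5 (A1 A2 : ℕ) (hA1 : 0 < A1) (hA2 : 0 < A2) (hgcd : Nat.gcd A1 A2 = 1)
    (s : ℕ) (hs : 0 < s) (a : Fin s → ℝ) (α β : Fin s → ℕ) (v : Fin s → ℕ) (B : ℕ)
    (ha : ∀ i, a i ≠ 0)
    (hB : ∀ i, A1 * α i + A2 * β i = B)
    (hsort : ∀ i j : Fin s, i < j → α j < α i)
    (hα : ∀ i, (α i : ℤ) = (α ⟨0, hs⟩ : ℤ) - (v i : ℤ) * (A2 : ℤ))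
    (hβ : ∀ i, β i = β ⟨0, hs⟩ + v i * A1) :
    (∀ x y : ℝ, 0 ≤ ∑ i, a i * x ^ α i * y ^ β i) ↔
      (0 < a ⟨0, hs⟩ ∧ 0 < a ⟨s - 1, Nat.sub_lt hs Nat.one_pos⟩ ∧
       Even (α ⟨0, hs⟩) ∧ Even (β ⟨0, hs⟩) ∧
       Even (α ⟨s - 1, Nat.sub_lt hs Nat.one_pos⟩) ∧
       Even (β ⟨s - 1, Nat.sub_lt hs Nat.one_pos⟩) ∧
       ∀ u : ℝ, 0 ≤ ∑ i, a i * u ^ v i) := by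
  set i0 : Fin s := ⟨0, hs⟩ with hi0def
  set iS : Fin s := ⟨s - 1, Nat.sub_lt hs Nat.one_pos⟩ with hiSdef
  -- basic arithmetic facts
  have hvα : ∀ i, α i0 = α i + v i * A2 := by
    intro i
    have h := hα i
    have h2 : ((α i0 : ℤ)) = (α i : ℤ) + (v i : ℤ) * (A2 : ℤ) := by linarith
    exact_mod_cast h2
  have hαle : ∀ i, α i ≤ α i0 := by
    intro i
    have := Nat.le_add_right (α i) (v i * A2)
    rw [← hvα i] at this
    exact this
  have hvmono : ∀ i j : Fin s, i < j → v i < v j := by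
    intro i j hij
    have h1 := hvα i
    have h2 := hvα j
    have h3 := hsort i j hij
    by_contra hc
    push_neg at hc
    have : v j * A2 ≤ v i * A2 := Nat.mul_le_mul_right _ hc
    linarith
  have hv0 : v i0 = 0 := by
    have h := hvα i0
    have h2 : v i0 * A2 = 0 := by linarith
    rcases Nat.mul_eq_zero.mp h2 with h3 | h3
    · exact h3
    · omega
  have hi0val : (i0 : ℕ) = 0 := rfl
  have hiSval : (iS : ℕ) = s - 1 := rfl
  have hi0lt : ∀ i : Fin s, i ≠ i0 → i0 < i := by
    intro i hi
    have h1 : (i : ℕ) ≠ 0 := fun h => hi (Fin.ext (h.trans hi0val.symm))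
    rw [Fin.lt_def, hi0val]
    omega
  have hiSlt : ∀ i : Fin s, i ≠ iS → i < iS := by
    intro i hi
    have h1 : (i : ℕ) ≠ s - 1 := fun h => hi (Fin.ext (h.trans hiSval.symm))
    have h2 : (i : ℕ) < s := i.isLt
    rw [Fin.lt_def, hiSval]
    omega
  have hvne : ∀ i, i ≠ i0 → 0 < v i := by
    intro i hi
    have h1 := hsort i0 i (hi0lt i hi)
    by_contra hc
    push_neg at hc
    have hvi : v i = 0 := Nat.le_zero.mp hc
    have := hvα i
    rw [hvi, zero_mul, add_zero] at this
    omega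
  have hβmono : ∀ i j : Fin s, i < j → β i < β j := by
    intro i j hij
    rw [hβ i, hβ j]
    have h := hvmono i j hij
    exact Nat.add_lt_add_left (Nat.mul_lt_mul_of_lt_of_le h (le_refl A1) hA1) _
  have hβle : ∀ i, β i ≤ β iS := by
    intro i
    rcases eq_or_ne i iS with rfl | hne
    · exact le_refl _
    · exact (hβmono i iS (hiSlt i hne)).le
  -- key identity
  have F1 : ∀ x y : ℝ, x ≠ 0 →
      ∑ i, a i * x ^ α i * y ^ β i
        = x ^ α i0 * y ^ β i0 * ∑ i, a i * (y ^ A1 / x ^ A2) ^ v i := by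
    intro x y hx
    rw [Finset.mul_sum]
    refine Finset.sum_congr rfl fun i _ => ?_
    have h1 := hvα i
    have h2 := hβ i
    rw [h2, h1, pow_add, pow_add, div_pow, ← pow_mul, ← pow_mul]
    have hxA : (x : ℝ) ^ (A2 * v i) ≠ 0 := pow_ne_zero _ hx
    field_simp
    ring
  constructor
  · intro H
    -- Claim 1: dominant term as x → ∞
    have claim1 : ∀ w y : ℝ, w ≠ 0 → 0 ≤ a i0 * w ^ α i0 * y ^ β i0 := by
      intro w y hw
      have key := aux_limit (fun i => a i * w ^ α i * y ^ β i) (fun i => α i0 - α i) ?_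
      · rw [Finset.sum_eq_single i0 ?_ ?_] at key
        · simpa using key
        · intro b _ hb
          have hne : α i0 - α b ≠ 0 := by
            have := hsort i0 b (hi0lt b hb)
            omega
          rw [zero_pow hne, mul_zero]
        · intro hmem
          exact absurd (Finset.mem_univ _) hmem
      · intro t ht
        have hpt := H (w / t) y
        have ht0 : (t:ℝ) ≠ 0 := ne_of_gt ht
        have heq : ∑ i, (a i * w ^ α i * y ^ β i) * t ^ (α i0 - α i)
            = t ^ α i0 * ∑ i, a i * (w / t) ^ α i * y ^ β i := by
          rw [Finset.mul_sum]
          refine Finset.sum_congr rfl fun i _ => ?_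
          rw [div_pow, pow_sub₀ t ht0 (hαle i)]
          ring
        rw [heq]
        exact mul_nonneg (pow_nonneg ht.le _) hpt
    have ha0 : 0 < a i0 := by
      have h1 := claim1 1 1 one_ne_zero
      simp only [one_pow, mul_one] at h1
      exact lt_of_le_of_ne h1 (Ne.symm (ha i0))
    have hβ0even : Even (β i0) := by
      rcases Nat.even_or_odd (β i0) with h | h
      · exact h
      · exfalso
        have h1 := claim1 1 (-1) one_ne_zero
        rw [h.neg_one_pow] at h1
        simp only [one_pow, mul_one, mul_neg] at h1
        linarith
    have hα0even : Even (α i0) := by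
      rcases Nat.even_or_odd (α i0) with h | h
      · exact h
      · exfalso
        have h1 := claim1 (-1) 1 (by norm_num)
        rw [h.neg_one_pow] at h1
        simp only [one_pow, mul_one, mul_neg] at h1
        linarith
    -- Claim 2: dominant term as y → ∞
    have claim2 : ∀ x w : ℝ, w ≠ 0 → 0 ≤ a iS * x ^ α iS * w ^ β iS := by
      intro x w hw
      have key := aux_limit (fun i => a i * x ^ α i * w ^ β i) (fun i => β iS - β i) ?_
      · rw [Finset.sum_eq_single iS ?_ ?_] at key
        · simpa using key
        · intro b _ hb
          have hne : β iS - β b ≠ 0 := by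
            have := hβmono b iS (hiSlt b hb)
            omega
          rw [zero_pow hne, mul_zero]
        · intro hmem
          exact absurd (Finset.mem_univ _) hmem
      · intro t ht
        have hpt := H x (w / t)
        have ht0 : (t:ℝ) ≠ 0 := ne_of_gt ht
        have heq : ∑ i, (a i * x ^ α i * w ^ β i) * t ^ (β iS - β i)
            = t ^ β iS * ∑ i, a i * x ^ α i * (w / t) ^ β i := by
          rw [Finset.mul_sum]
          refine Finset.sum_congr rfl fun i _ => ?_
          rw [div_pow, pow_sub₀ t ht0 (hβle i)]
          ring
        rw [heq]
        exact mul_nonneg (pow_nonneg ht.le _) hpt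
    have haS : 0 < a iS := by
      have h1 := claim2 1 1 one_ne_zero
      simp only [one_pow, mul_one] at h1
      exact lt_of_le_of_ne h1 (Ne.symm (ha iS))
    have hβSeven : Even (β iS) := by
      rcases Nat.even_or_odd (β iS) with h | h
      · exact h
      · exfalso
        have h1 := claim2 1 (-1) (by norm_num)
        rw [h.neg_one_pow] at h1
        simp only [one_pow, mul_one, mul_neg] at h1
        linarith
    have hαSeven : Even (α iS) := by
      rcases Nat.even_or_odd (α iS) with h | h
      · exact h
      · exfalso
        have h1 := claim2 (-1) 1 one_ne_zero
        rw [h.neg_one_pow] at h1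
        simp only [one_pow, mul_one, mul_neg] at h1
        linarith
    -- g nonneg
    have hg1 : ∀ y : ℝ, y ≠ 0 → 0 ≤ ∑ i, a i * (y ^ A1) ^ v i := by
      intro y hy
      have h1 := H 1 y
      rw [F1 1 y one_ne_zero] at h1
      simp only [one_pow, div_one, one_mul] at h1
      have hyp : 0 < y ^ β i0 := hβ0even.pow_pos hy
      by_contra hc
      push_neg at hc
      nlinarith
    have hgpos : ∀ u : ℝ, 0 < u → 0 ≤ ∑ i, a i * u ^ v i := by
      intro u hu
      have hy : ((u ^ ((A1:ℝ)⁻¹) : ℝ)) ^ A1 = u := by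
        rw [← Real.rpow_natCast (u ^ ((A1:ℝ)⁻¹)) A1, ← Real.rpow_mul hu.le,
          inv_mul_cancel₀ (by exact_mod_cast hA1.ne'), Real.rpow_one]
      have := hg1 (u ^ ((A1:ℝ)⁻¹)) (ne_of_gt (Real.rpow_pos_of_pos hu _))
      rwa [hy] at this
    have hg0 : (0:ℝ) ≤ ∑ i, a i * (0:ℝ) ^ v i := by
      rw [Finset.sum_eq_single i0 ?_ ?_]
      · rw [hv0, pow_zero, mul_one]
        exact ha0.le
      · intro b _ hb
        rw [zero_pow (hvne b hb).ne', mul_zero]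
      · intro hmem
        exact absurd (Finset.mem_univ _) hmem
    have hgneg : ∀ u : ℝ, u < 0 → 0 ≤ ∑ i, a i * u ^ v i := by
      intro u hu
      have hupos : (0:ℝ) < -u := by linarith
      have hz : ((((-u) ^ ((A1:ℝ)⁻¹)) : ℝ)) ^ A1 = -u := by
        rw [← Real.rpow_natCast ((-u) ^ ((A1:ℝ)⁻¹)) A1, ← Real.rpow_mul hupos.le,
          inv_mul_cancel₀ (by exact_mod_cast hA1.ne'), Real.rpow_one]
      set z : ℝ := (-u) ^ ((A1:ℝ)⁻¹) with hzdef
      have hzpos : 0 < z := Real.rpow_pos_of_pos hupos _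
      rcases Nat.even_or_odd A1 with hA1e | hA1o
      · -- A1 even, so A2 odd
        have hA2odd : Odd A2 := by
          rcases Nat.even_or_odd A2 with h2 | h2
          · exfalso
            have hd : (2:ℕ) ∣ Nat.gcd A1 A2 :=
              Nat.dvd_gcd hA1e.two_dvd h2.two_dvd
            rw [hgcd] at hd
            norm_num at hd
          · exact h2
        have h1 := H (-1) z
        rw [F1 (-1) z (by norm_num)] at h1
        rw [hα0even.neg_one_pow, hA2odd.neg_one_pow, hz] at h1
        have hdiv : (-u) / (-1:ℝ) = u := by ring
        rw [hdiv, one_mul] at h1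
        have hzp : 0 < z ^ β i0 := pow_pos hzpos _
        by_contra hc
        push_neg at hc
        nlinarith
      · -- A1 odd
        have hy : ((-z : ℝ)) ^ A1 = u := by
          rw [neg_pow, hA1o.neg_one_pow, hz]
          ring
        have := hg1 (-z) (by intro h; rw [neg_eq_zero] at h; exact hzpos.ne' h)
        rwa [hy] at this
    refine ⟨ha0, haS, hα0even, hβ0even, hαSeven, hβSeven, ?_⟩
    intro u
    rcases lt_trichotomy u 0 with h | h | h
    · exact hgneg u h
    · rw [h]; exact hg0
    · exact hgpos u h
  · rintro ⟨ha0, haS, hα0, hβ0, hαS, hβS, hg⟩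
    intro x y
    rcases eq_or_ne x 0 with rfl | hx
    · apply Finset.sum_nonneg
      intro i _
      rcases eq_or_ne (α i) 0 with hαi | hαi
      · have hiiS : i = iS := by
          by_contra hne
          have := hsort i iS (hiSlt i hne)
          omega
        subst hiiS
        rw [hαi, pow_zero, mul_one]
        exact mul_nonneg haS.le (hβS.pow_nonneg y)
      · rw [zero_pow hαi, mul_zero, zero_mul]
    · rw [F1 x y hx]
      exact mul_nonneg (mul_nonneg (hα0.pow_nonneg x) (hβ0.pow_nonneg y)) (hg _)
end

section
/- Let A = (A_1, A_2) ∈ ℕ², u_0 ≠ 0, l an even natural number, and let p(x,y) = (y^{A_1} − u_0 x^{A_2})^l · q(x,y), where q is a polynomial with q(0,0) = 0. Then (0,0) is a local minimum of p if and only if (0,0) is a local minimum of q. -/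
/-- Assertion 11: Let `A = (A₁,A₂) ∈ ℕ²`, `u₀ ≠ 0`, `l` even, and
`p(x,y) = (y^{A₁} − u₀x^{A₂})^l · q(x,y)` with `q` a polynomial, `q(0,0) = 0`.
Then `(0,0)` is a local minimum of `p` iff it is a local minimum of `q`. -/
theorem stmt_15 (A1 A2 : ℕ) (hA1 : 0 < A1) (hA2 : 0 < A2)
    (u0 : ℝ) (hu0 : u0 ≠ 0) (l : ℕ) (hl : Even l)
    (q : ℝ → ℝ → ℝ) (Q : MvPolynomial (Fin 2) ℝ)
    (hQ : ∀ u v : ℝ, q u v = MvPolynomial.eval ![u, v] Q)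
    (hq0 : q 0 0 = 0) :
    (IsLocalMin
        (fun p : ℝ × ℝ => (p.2 ^ A1 - u0 * p.1 ^ A2) ^ l * q p.1 p.2) (0, 0) ↔
      IsLocalMin (fun p : ℝ × ℝ => q p.1 p.2) (0, 0)) := by
  have hqc : Continuous fun z : ℝ × ℝ => q z.1 z.2 := by
    have : (fun z : ℝ × ℝ => q z.1 z.2) = fun z : ℝ × ℝ =>
        MvPolynomial.eval ![z.1, z.2] Q := by
      funext z; exact hQ z.1 z.2
    rw [this]
    refine Q.continuous_eval.comp (continuous_pi fun i => ?_)
    fin_cases i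
    · exact continuous_fst
    · exact continuous_snd
  have hp00 : ((0:ℝ) ^ A1 - u0 * (0:ℝ) ^ A2) ^ l * q 0 0 = 0 := by
    rw [hq0, mul_zero]
  constructor
  · intro h
    rw [IsLocalMin, IsMinFilter] at h ⊢
    simp only [hp00, hq0, mul_zero] at h ⊢
    rw [Metric.eventually_nhds_iff] at h ⊢
    obtain ⟨ε, hε, hball⟩ := h
    refine ⟨ε, hε, fun z hz => ?_⟩
    by_contra hneg
    push_neg at hneg
    obtain ⟨x₀, y₀⟩ := z
    -- the set where q x₀ · < 0 and we stay in the ball is open and contains y₀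
    have hU : IsOpen {y : ℝ | q x₀ y < 0 ∧ dist ((x₀, y) : ℝ × ℝ) (0, 0) < ε} := by
      have h1 : Continuous fun y : ℝ => q x₀ y :=
        hqc.comp (continuous_const.prodMk continuous_id)
      have h2 : Continuous fun y : ℝ => dist ((x₀, y) : ℝ × ℝ) ((0, 0) : ℝ × ℝ) :=
        ((continuous_const.prodMk continuous_id).dist continuous_const)
      exact (isOpen_lt h1 continuous_const).inter (isOpen_lt h2 continuous_const)
    have hy₀ : y₀ ∈ {y : ℝ | q x₀ y < 0 ∧ dist ((x₀, y) : ℝ × ℝ) (0, 0) < ε} :=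
      ⟨hneg, hz⟩
    obtain ⟨δ, hδ, hsub⟩ := Metric.isOpen_iff.mp hU y₀ hy₀
    -- the bad set of roots is finite
    have hfin : Set.Finite {y : ℝ | y ^ A1 - u0 * x₀ ^ A2 = 0} := by
      have hne : (Polynomial.X ^ A1 - Polynomial.C (u0 * x₀ ^ A2) : Polynomial ℝ) ≠ 0 :=
        Polynomial.X_pow_sub_C_ne_zero hA1 _
      have := Polynomial.finite_setOf_isRoot hne
      refine this.subset fun y hy => ?_
      simpa [Polynomial.IsRoot, sub_eq_zero] using hy
    have hinf : (Set.Ioo (y₀ - δ) (y₀ + δ)).Infinite :=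
      Set.Ioo_infinite (by linarith)
    obtain ⟨y, hyI, hyS⟩ :
        ∃ y ∈ Set.Ioo (y₀ - δ) (y₀ + δ), y ∉ {y : ℝ | y ^ A1 - u0 * x₀ ^ A2 = 0} := by
      by_contra hc
      push_neg at hc
      exact hinf (hfin.subset hc)
    have hyU : y ∈ {y : ℝ | q x₀ y < 0 ∧ dist ((x₀, y) : ℝ × ℝ) (0, 0) < ε} := by
      apply hsub
      rw [Metric.mem_ball, Real.dist_eq, abs_lt]
      constructor <;> [linarith [hyI.1]; linarith [hyI.2]]
    have hfacpos : 0 < (y ^ A1 - u0 * x₀ ^ A2) ^ l :=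
      hl.pow_pos hyS
    have := hball hyU.2
    nlinarith [hyU.1]
  · intro h
    rw [IsLocalMin, IsMinFilter] at h ⊢
    simp only [hp00, hq0, mul_zero] at h ⊢
    filter_upwards [h] with z hz
    exact mul_nonneg (hl.pow_nonneg _) hz
end

section
/- Let A = (A_1, A_2) ∈ ℕ² with gcd(A_1, A_2) = 1, and let φ(x,y) = x^{α_1} y^{β_1} g(x^{−A_2} y^{A_1}) (for x ≠ 0) be an A-quasi-homogeneous form with characteristic polynomial g of degree r_1 = (α_1 − α_s)/A_2. Suppose u_0 is a root of g of multiplicity k, so g(u) = (u − u_0)^k ḡ(u) with ḡ(u_0) ≠ 0. Then φ(x,y) = (y^{A_1} − u_0 x^{A_2})^k · φ̄(x,y), where φ̄(x,y) = x^{α_1 − kA_2} y^{β_1} ḡ(x^{−A_2} y^{A_1}) is again an A-quasi-homogeneous polynomial form of weight B − k A_1 A_2. -/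
open Polynomial

/-- Let `φ(x,y) = Σ aᵢ x^{αᵢ} y^{βᵢ}` be an A-quasi-homogeneous form
(`A ∈ ℕ²`, `gcd(A₁,A₂)=1`, weight `B`, `α₁ > ... > α_s ≥ 0`,
`(αᵢ,βᵢ) = (α₁ − vᵢA₂, β₁ + vᵢA₁)`) with characteristic polynomial
`g(u) = Σ aᵢ u^{vᵢ}`. If `u₀` is a root of `g` of multiplicity `k`, i.e.
`g = (u − u₀)^k ḡ` with `ḡ(u₀) ≠ 0`, then `φ(x,y) = (y^{A₁} − u₀x^{A₂})^k · φ̄(x,y)`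
where `φ̄` is again an A-quasi-homogeneous polynomial form of weight `B − kA₁A₂`,
with `φ̄(x,y) = x^{α₁−kA₂} y^{β₁} ḡ(x^{−A₂}y^{A₁})` for `x ≠ 0` (and `kA₂ ≤ α₁`). -/
theorem stmt_16 (A1 A2 : ℕ) (hA1 : 0 < A1) (hA2 : 0 < A2) (hgcd : Nat.gcd A1 A2 = 1)
    (s : ℕ) (hs : 0 < s) (a : Fin s → ℝ) (α β : Fin s → ℕ) (v : Fin s → ℕ) (B : ℕ)
    (ha : ∀ i, a i ≠ 0)
    (hB : ∀ i, A1 * α i + A2 * β i = B)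
    (hsort : ∀ i j : Fin s, i < j → α j < α i)
    (hα : ∀ i, (α i : ℤ) = (α ⟨0, hs⟩ : ℤ) - (v i : ℤ) * (A2 : ℤ))
    (hβ : ∀ i, β i = β ⟨0, hs⟩ + v i * A1)
    (u0 : ℝ) (k : ℕ) (gbar : Polynomial ℝ)
    (hfac : (∑ i, Polynomial.C (a i) * Polynomial.X ^ v i)
        = (Polynomial.X - Polynomial.C u0) ^ k * gbar)
    (hgbar : gbar.eval u0 ≠ 0) :
    k * A2 ≤ α ⟨0, hs⟩ ∧
    ∃ (t : ℕ) (b : Fin t → ℝ) (γ δ : Fin t → ℕ),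
      (∀ j, (A1 : ℤ) * (γ j : ℤ) + (A2 : ℤ) * (δ j : ℤ)
          = (B : ℤ) - (k : ℤ) * (A1 : ℤ) * (A2 : ℤ)) ∧
      (∀ x y : ℝ, ∑ i, a i * x ^ α i * y ^ β i
          = (y ^ A1 - u0 * x ^ A2) ^ k * ∑ j, b j * x ^ γ j * y ^ δ j) ∧
      (∀ x y : ℝ, x ≠ 0 → ∑ j, b j * x ^ γ j * y ^ δ j
          = x ^ ((α ⟨0, hs⟩ : ℤ) - (k : ℤ) * (A2 : ℤ)) * y ^ (β ⟨0, hs⟩) *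
            gbar.eval (x ^ (-(A2 : ℤ)) * y ^ A1)) := by
  have hlast : s - 1 < s := Nat.sub_lt hs one_pos
  set i0 : Fin s := ⟨0, hs⟩ with hi0def
  set il : Fin s := ⟨s - 1, hlast⟩ with hildef
  set g : Polynomial ℝ := ∑ i, Polynomial.C (a i) * Polynomial.X ^ v i with hgdef
  have hA2z : (0:ℤ) < (A2 : ℤ) := by exact_mod_cast hA2
  have hvlt : ∀ i : Fin s, i ≠ il → v i < v il := by
    intro i hi
    have hil : i < il := by
      have h1 : i.val ≤ s - 1 := Nat.le_sub_one_of_lt i.isLt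
      rcases lt_or_eq_of_le h1 with h | h
      · exact Fin.lt_def.mpr h
      · exact absurd (Fin.ext h) hi
    have h1 : α il < α i := hsort i il hil
    have h2 := hα i
    have h3 := hα il
    have h4 : (α il : ℤ) < (α i : ℤ) := by exact_mod_cast h1
    have h5 : (v i : ℤ) * (A2 : ℤ) < (v il : ℤ) * (A2 : ℤ) := by linarith
    have h6 := lt_of_mul_lt_mul_right h5 hA2z.le
    exact_mod_cast h6
  have hvle : ∀ i : Fin s, v i ≤ v il := by
    intro i
    rcases eq_or_ne i il with rfl | h
    · exact le_rfl
    · exact (hvlt i h).le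
  have hcoeff : g.coeff (v il) = a il := by
    rw [hgdef, Polynomial.finset_sum_coeff]
    rw [Finset.sum_eq_single il]
    · simp
    · intro i _ hi
      have hne := (hvlt i hi).ne'
      simp [Polynomial.coeff_C_mul, Polynomial.coeff_X_pow, hne]
    · simp
  have hgne : g ≠ 0 := by
    intro h
    exact ha il (by rw [← hcoeff, h]; simp)
  have hgbarne : gbar ≠ 0 := by
    rintro rfl
    exact hgne (by rw [hfac, mul_zero])
  have hgle : g.natDegree ≤ v il := by
    rw [hgdef]
    apply Polynomial.natDegree_sum_le_of_forall_le
    intro i _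
    exact (Polynomial.natDegree_C_mul_le _ _).trans (by simpa using hvle i)
  have hkd : k + gbar.natDegree ≤ v il := by
    have h1 : g.natDegree = k + gbar.natDegree := by
      rw [hfac, Polynomial.natDegree_mul (pow_ne_zero _ (Polynomial.X_sub_C_ne_zero u0)) hgbarne,
        Polynomial.natDegree_pow, Polynomial.natDegree_X_sub_C, mul_one]
    omega
  have hvmA : v il * A2 ≤ α i0 := by
    have h0 : (0:ℤ) ≤ (α il : ℤ) := Int.natCast_nonneg _
    have h1 : ((v il : ℤ)) * A2 ≤ (α i0 : ℤ) := by linarith [hα il]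
    exact_mod_cast h1
  have hk1 : k * A2 ≤ α i0 := le_trans (Nat.mul_le_mul_right _ (by omega)) hvmA
  have hγn : ∀ m : ℕ, m ≤ gbar.natDegree →
      ((α i0 - (k + m) * A2 : ℕ) : ℤ) = (α i0 : ℤ) - (k + m) * A2 := by
    intro m hm
    have h1 : (k + m) * A2 ≤ α i0 :=
      le_trans (Nat.mul_le_mul_right _ (by omega)) hvmA
    rw [Nat.cast_sub h1]
    push_cast
    ring
  have hBz : (A1:ℤ) * α i0 + A2 * β i0 = B := by exact_mod_cast hB i0
  -- the key formula for x ≠ 0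
  have key : ∀ x y : ℝ, x ≠ 0 →
      (∑ m : Fin (gbar.natDegree + 1),
          gbar.coeff m * x ^ (α i0 - (k + m.val) * A2) * y ^ (β i0 + m.val * A1))
        = x ^ ((α i0 : ℤ) - k * A2) * y ^ β i0 *
            gbar.eval (x ^ (-(A2 : ℤ)) * y ^ A1) := by
    intro x y hx
    rw [Polynomial.eval_eq_sum_range, Finset.mul_sum]
    rw [Fin.sum_univ_eq_sum_range
      (fun m => gbar.coeff m * x ^ (α i0 - (k + m) * A2) * y ^ (β i0 + m * A1))]
    apply Finset.sum_congr rfl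
    intro m hm
    have hm' : m ≤ gbar.natDegree := Nat.lt_succ_iff.mp (Finset.mem_range.mp hm)
    have hxp : x ^ (α i0 - (k + m) * A2)
        = x ^ ((α i0 : ℤ) - k * A2) * (x ^ (-(A2:ℤ))) ^ m := by
      rw [← zpow_natCast x (α i0 - (k + m) * A2), hγn m hm',
        ← zpow_natCast (x ^ (-(A2:ℤ))) m, ← zpow_mul, ← zpow_add₀ hx]
      congr 1
      push_cast
      ring
    rw [hxp, pow_add, pow_mul, mul_pow]
    ring
  -- value of φ for x ≠ 0
  have hL : ∀ x y : ℝ, x ≠ 0 →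
      (∑ i, a i * x ^ α i * y ^ β i)
        = x ^ ((α i0 : ℤ)) * y ^ β i0 * g.eval (x ^ (-(A2 : ℤ)) * y ^ A1) := by
    intro x y hx
    rw [hgdef, Polynomial.eval_finset_sum, Finset.mul_sum]
    apply Finset.sum_congr rfl
    intro i _
    simp only [Polynomial.eval_mul, Polynomial.eval_C, Polynomial.eval_pow, Polynomial.eval_X]
    have hxp : x ^ α i = x ^ ((α i0 : ℤ)) * (x ^ (-(A2:ℤ))) ^ (v i) := by
      rw [← zpow_natCast x (α i), ← zpow_natCast (x ^ (-(A2:ℤ))) (v i), ← zpow_mul,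
        ← zpow_add₀ hx]
      rw [hα i]
      congr 1
      push_cast
      ring
    rw [hβ i, hxp, pow_add, pow_mul, mul_pow]
    ring
  refine ⟨hk1, gbar.natDegree + 1, fun m => gbar.coeff m,
    fun m => α i0 - (k + m.val) * A2, fun m => β i0 + m.val * A1, ?_, ?_, ?_⟩
  · intro j
    rw [hγn j (Nat.lt_succ_iff.mp j.isLt)]
    push_cast
    linear_combination hBz
  · intro x y
    have heqon : Set.EqOn (fun x : ℝ => ∑ i, a i * x ^ α i * y ^ β i)
        (fun x : ℝ => (y ^ A1 - u0 * x ^ A2) ^ k *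
          ∑ m : Fin (gbar.natDegree + 1),
            gbar.coeff m * x ^ (α i0 - (k + m.val) * A2) * y ^ (β i0 + m.val * A1))
        {(0:ℝ)}ᶜ := by
      intro z hz
      simp only [Set.mem_compl_iff, Set.mem_singleton_iff] at hz
      simp only []
      rw [hL z y hz, key z y hz, hfac, Polynomial.eval_mul, Polynomial.eval_pow,
        Polynomial.eval_sub, Polynomial.eval_X, Polynomial.eval_C]
      have hone : z ^ ((A2:ℤ)) * z ^ (-(A2:ℤ)) = 1 := by
        rw [← zpow_add₀ hz]; simp
      have hfactor : y ^ A1 - u0 * z ^ A2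
          = z ^ ((A2:ℤ)) * (z ^ (-(A2:ℤ)) * y ^ A1 - u0) := by
        rw [mul_sub, ← mul_assoc, hone, one_mul, zpow_natCast]
        ring
      have hsplit : z ^ ((α i0 : ℤ))
          = (z ^ ((A2:ℤ))) ^ k * z ^ ((α i0 : ℤ) - k * A2) := by
        rw [← zpow_natCast (z ^ ((A2:ℤ))) k, ← zpow_mul, ← zpow_add₀ hz]
        congr 1
        ring
      rw [hfactor, mul_pow, hsplit]
      ring
    have hc1 : Continuous fun x : ℝ => ∑ i, a i * x ^ α i * y ^ β i := by
      apply continuous_finset_sum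
      intro i _
      fun_prop
    have hc2 : Continuous fun x : ℝ => (y ^ A1 - u0 * x ^ A2) ^ k *
        ∑ m : Fin (gbar.natDegree + 1),
          gbar.coeff m * x ^ (α i0 - (k + m.val) * A2) * y ^ (β i0 + m.val * A1) := by
      apply Continuous.mul
      · fun_prop
      · apply continuous_finset_sum
        intro i _
        fun_prop
    exact congrFun (hc1.ext_on (dense_compl_singleton 0) hc2 heqon) x
  · intro x y hx
    exact key x y hx
end

section
/- Let A = (A_1, A_2) ∈ ℕ₀² (natural components, gcd 1), and suppose a polynomial p(x,y) is the sum of exactly two A-quasi-homogeneous forms, p = φ_1^A + φ_2^A, with distinct weights B_1 < B_2. Then there is no Ā ∈ ℕ₀² with Ā ≠ A such that the main Ā-quasi-homogeneous form of p contains three or more monomials. -/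
lemma aux_eq (A1 A2 A'1 A'2 : ℕ) (hA1 : 0 < A1) (hA2 : 0 < A2)
    (hgcd : Nat.gcd A1 A2 = 1) (hA'1 : 0 < A'1) (hA'2 : 0 < A'2)
    (hgcd' : Nat.gcd A'1 A'2 = 1) (hcross : A1 * A'2 = A2 * A'1) :
    A'1 = A1 ∧ A'2 = A2 := by
  have h1 : A1 ∣ A'1 := (Nat.Coprime.dvd_of_dvd_mul_left hgcd ⟨A'2, by linarith⟩)
  have h2 : A'1 ∣ A1 := (Nat.Coprime.dvd_of_dvd_mul_left hgcd' ⟨A2, by linarith⟩)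
  have e1 : A'1 = A1 := Nat.dvd_antisymm h2 h1
  subst e1
  have : A'2 = A2 := by
    have h : A'2 * A'1 = A2 * A'1 := by linarith
    exact Nat.eq_of_mul_eq_mul_right hA'1 h
  exact ⟨rfl, this⟩

lemma aux_card (A1 A2 A'1 A'2 : ℕ) (hA1 : 0 < A1) (hA2 : 0 < A2)
    (hgcd : Nat.gcd A1 A2 = 1) (hA'1 : 0 < A'1) (hA'2 : 0 < A'2)
    (hgcd' : Nat.gcd A'1 A'2 = 1) (hne : (A'1, A'2) ≠ (A1, A2))
    (N : Finset (ℕ × ℕ)) (B m : ℕ) (hw : ∀ k ∈ N, A1 * k.1 + A2 * k.2 = B) :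
    (N.filter (fun k => A'1 * k.1 + A'2 * k.2 = m)).card ≤ 1 := by
  rw [Finset.card_le_one]
  intro a ha b hb
  simp only [Finset.mem_filter] at ha hb
  by_contra hab
  -- cast to ℤ
  have e1 : (A1 : ℤ) * ((a.1 : ℤ) - b.1) = (A2 : ℤ) * ((b.2 : ℤ) - a.2) := by
    have h1 := hw a ha.1; have h2 := hw b hb.1
    have : (A1 : ℤ) * a.1 + A2 * a.2 = A1 * b.1 + A2 * b.2 := by exact_mod_cast by omega
    ring_nf; linarith
  have e2 : (A'1 : ℤ) * ((a.1 : ℤ) - b.1) = (A'2 : ℤ) * ((b.2 : ℤ) - a.2) := by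
    have : (A'1 : ℤ) * a.1 + A'2 * a.2 = A'1 * b.1 + A'2 * b.2 := by
      exact_mod_cast by omega
    ring_nf; linarith
  have hx : (a.1 : ℤ) - b.1 ≠ 0 := by
    intro h
    have : (A2 : ℤ) * ((b.2 : ℤ) - a.2) = 0 := by rw [← e1, h]; ring
    have hA2' : (A2 : ℤ) ≠ 0 := by exact_mod_cast hA2.ne'
    have : (b.2 : ℤ) - a.2 = 0 := by
      rcases mul_eq_zero.mp this with h' | h'
      · exact absurd h' hA2'
      · exact h'
    apply hab
    have : a.1 = b.1 ∧ a.2 = b.2 := by constructor <;> omega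
    exact Prod.ext this.1 this.2
  have hy : (b.2 : ℤ) - a.2 ≠ 0 := by
    intro h
    rw [h, mul_zero] at e1
    have hA1' : (A1 : ℤ) ≠ 0 := by exact_mod_cast hA1.ne'
    rcases mul_eq_zero.mp e1 with h' | h'
    · exact hA1' h'
    · exact hx h'
  have hcross : (A1 : ℤ) * A'2 = A2 * A'1 := by
    have hde : ((a.1:ℤ) - b.1) * ((b.2:ℤ) - a.2) ≠ 0 := mul_ne_zero hx hy
    apply mul_right_cancel₀ hde
    calc (A1 : ℤ) * A'2 * (((a.1:ℤ) - b.1) * ((b.2:ℤ) - a.2))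
        = ((A1:ℤ) * ((a.1:ℤ) - b.1)) * ((A'2:ℤ) * ((b.2:ℤ) - a.2)) := by ring
      _ = ((A2:ℤ) * ((b.2:ℤ) - a.2)) * ((A'1:ℤ) * ((a.1:ℤ) - b.1)) := by rw [e1, e2]
      _ = (A2 : ℤ) * A'1 * (((a.1:ℤ) - b.1) * ((b.2:ℤ) - a.2)) := by ring
  have : A1 * A'2 = A2 * A'1 := by exact_mod_cast hcross
  obtain ⟨h1, h2⟩ := aux_eq A1 A2 A'1 A'2 hA1 hA2 hgcd hA'1 hA'2 hgcd' this
  exact hne (by rw [h1, h2])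

/-- Assertion 10: If the support `N` of a polynomial `p` splits into
the supports `N₁, N₂` of two A-quasi-homogeneous forms of distinct weights
`B₁ < B₂` (where `A ∈ ℕ₀²`, i.e. positive entries with gcd 1), then there is no
`A' ∈ ℕ₀²` with `A' ≠ A` whose main `A'`-quasi-homogeneous form of `p` (the set of
points of `N` minimizing `⟨A', ·⟩`) contains three or more monomials. -/
theorem stmt_17 (A1 A2 : ℕ) (hA1 : 0 < A1) (hA2 : 0 < A2) (hgcd : Nat.gcd A1 A2 = 1)
    (N1 N2 : Finset (ℕ × ℕ)) (hN1 : N1.Nonempty) (hN2 : N2.Nonempty)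
    (B1 B2 : ℕ) (hBlt : B1 < B2)
    (hw1 : ∀ k ∈ N1, A1 * k.1 + A2 * k.2 = B1)
    (hw2 : ∀ k ∈ N2, A1 * k.1 + A2 * k.2 = B2) :
    ∀ A'1 A'2 : ℕ, 0 < A'1 → 0 < A'2 → Nat.gcd A'1 A'2 = 1 → (A'1, A'2) ≠ (A1, A2) →
      ∀ m : ℕ, (∀ k ∈ N1 ∪ N2, m ≤ A'1 * k.1 + A'2 * k.2) →
        ((N1 ∪ N2).filter (fun k => A'1 * k.1 + A'2 * k.2 = m)).card < 3 := by
  intro A'1 A'2 hA'1 hA'2 hgcd' hne m _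
  have h1 := aux_card A1 A2 A'1 A'2 hA1 hA2 hgcd hA'1 hA'2 hgcd' hne N1 B1 m hw1
  have h2 := aux_card A1 A2 A'1 A'2 hA1 hA2 hgcd hA'1 hA'2 hgcd' hne N2 B2 m hw2
  calc ((N1 ∪ N2).filter (fun k => A'1 * k.1 + A'2 * k.2 = m)).card
      ≤ ((N1.filter (fun k => A'1 * k.1 + A'2 * k.2 = m)) ∪
         (N2.filter (fun k => A'1 * k.1 + A'2 * k.2 = m))).card := by
        apply Finset.card_le_card
        rw [Finset.filter_union]
    _ ≤ _ + _ := Finset.card_union_le _ _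
    _ < 3 := by omega
end

section
/- Let A = (A_1, A_2) ∈ ℕ² and e = (−A_2, A_1). For a quasi-homogeneous form φ_2(x,y) = x^{χ_1} y^{η_1} g_2(x^{e_1} y^{e_2}) with g_2(u_0) ≠ 0 and u_0 ≠ 0, if the integer e_1 η_1 − e_2 χ_1 is odd, then the system {x ≠ 0, y ≠ 0, x^{e_1} y^{e_2} = u_0, x^{χ_1} y^{η_1} g_2(u_0) < 0} has a solution (x, y) ∈ ℝ². -/
private lemma pm_pow {s : ℝ} (h : s = 1 ∨ s = -1) (n : ℕ) : s ^ n = 1 ∨ s ^ n = -1 := by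
  rcases h with h | h <;> subst h
  · left; simp
  · rcases Nat.even_or_odd n with he | ho
    · left; exact he.neg_one_pow
    · right; exact ho.neg_one_pow

private lemma pm_pow_odd {s : ℝ} (h : s = 1 ∨ s = -1) {n : ℕ} (hn : Odd n) : s ^ n = s := by
  rcases h with h | h <;> subst h
  · simp
  · exact hn.neg_one_pow

private lemma pm_pow_even {s : ℝ} (h : s = 1 ∨ s = -1) {n : ℕ} (hn : Even n) : s ^ n = 1 := by
  rcases h with h | h <;> subst h
  · simp
  · exact hn.neg_one_pow

/-- With `A ∈ ℕ²`, `gcd(A₁,A₂)=1`, `e = (−A₂, A₁)`, if `g₂(u₀) ≠ 0`,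
`u₀ ≠ 0`, and the integer `e₁η₁ − e₂χ₁` is odd, then the system
`x ≠ 0, y ≠ 0, x^{e₁}y^{e₂} = u₀, x^{χ₁}y^{η₁}g₂(u₀) < 0` has a real solution. -/
theorem stmt_18 (A1 A2 : ℕ) (hA1 : 0 < A1) (hA2 : 0 < A2) (hgcd : Nat.gcd A1 A2 = 1)
    (χ1 η1 : ℕ) (g2 : ℝ → ℝ) (u0 : ℝ) (hu0 : u0 ≠ 0) (hg : g2 u0 ≠ 0)
    (hodd : Odd ((-(A2 : ℤ)) * (η1 : ℤ) - (A1 : ℤ) * (χ1 : ℤ))) :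
    ∃ x y : ℝ, x ≠ 0 ∧ y ≠ 0 ∧
      x ^ (-(A2 : ℤ)) * y ^ ((A1 : ℤ)) = u0 ∧
      x ^ χ1 * y ^ η1 * g2 u0 < 0 := by
  -- parity info
  have hoddN : Odd (A2 * η1 + A1 * χ1) := by
    have h1 : Odd (-((A2 : ℤ) * η1 + A1 * χ1)) := by
      convert hodd using 1; ring
    have h2 : Odd ((A2 : ℤ) * η1 + A1 * χ1) := by simpa using h1.neg
    have : Odd (((A2 * η1 + A1 * χ1 : ℕ) : ℤ)) := by push_cast; exact_mod_cast h2
    exact_mod_cast Int.odd_coe_nat _ |>.mp this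
  -- sign variables
  set s : ℝ := if 0 < u0 then 1 else -1 with hs_def
  set σ : ℝ := if 0 < g2 u0 then -1 else 1 with hσ_def
  have hs : s = 1 ∨ s = -1 := by rw [hs_def]; split_ifs <;> simp
  have hσ : σ = 1 ∨ σ = -1 := by rw [hσ_def]; split_ifs <;> simp
  have hsu : s * |u0| = u0 := by
    rw [hs_def]; split_ifs with h
    · rw [abs_of_pos h]; ring
    · rw [abs_of_neg (lt_of_le_of_ne (not_lt.mp h) hu0)]; ring
  have hσg : σ * g2 u0 < 0 := by
    rw [hσ_def]; split_ifs with h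
    · nlinarith
    · have : g2 u0 < 0 := lt_of_le_of_ne (not_lt.mp h) hg
      nlinarith
  -- radial part
  set r : ℝ := |u0| ^ ((A1 : ℝ)⁻¹) with hr_def
  have habs : (0:ℝ) < |u0| := abs_pos.mpr hu0
  have hr_pos : 0 < r := Real.rpow_pos_of_pos habs _
  have hrA1 : r ^ A1 = |u0| := by
    rw [hr_def, ← Real.rpow_natCast (|u0| ^ ((A1:ℝ)⁻¹)) A1, ← Real.rpow_mul habs.le]
    rw [inv_mul_cancel₀ (by exact_mod_cast hA1.ne' : (A1:ℝ) ≠ 0), Real.rpow_one]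
  set x : ℝ := s ^ η1 * σ ^ A1 with hx_def
  set y : ℝ := s ^ χ1 * σ ^ A2 * r with hy_def
  have hx_pm : x = 1 ∨ x = -1 := by
    rcases pm_pow hs η1 with h1 | h1 <;> rcases pm_pow hσ A1 with h2 | h2 <;>
      rw [hx_def, h1, h2] <;> norm_num
  have hx_ne : x ≠ 0 := by rcases hx_pm with h | h <;> rw [h] <;> norm_num
  have hy_ne : y ≠ 0 := by
    rcases pm_pow hs χ1 with h1 | h1 <;> rcases pm_pow hσ A2 with h2 | h2 <;>
      rw [hy_def, h1, h2] <;> simp [hr_pos.ne']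
  refine ⟨x, y, hx_ne, hy_ne, ?_, ?_⟩
  · -- x ^ (-A2) * y ^ A1 = u0
    have hxA2 : x ^ (-(A2:ℤ)) = x ^ A2 := by
      rw [zpow_neg, zpow_natCast]
      rcases pm_pow hx_pm A2 with h | h <;> rw [h] <;> norm_num
    rw [hxA2, zpow_natCast]
    have : x ^ A2 * y ^ A1 =
        s ^ (η1 * A2 + χ1 * A1) * σ ^ (A1 * A2 + A2 * A1) * r ^ A1 := by
      rw [hx_def, hy_def]; ring
    rw [this, hrA1]
    have h1 : s ^ (η1 * A2 + χ1 * A1) = s :=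
      pm_pow_odd hs (by rwa [mul_comm A2 η1, mul_comm A1 χ1] at hoddN)
    have h2 : σ ^ (A1 * A2 + A2 * A1) = 1 :=
      pm_pow_even hσ ⟨A1 * A2, by ring⟩
    rw [h1, h2, mul_one, hsu]
  · -- x ^ χ1 * y ^ η1 * g2 u0 < 0
    have : x ^ χ1 * y ^ η1 =
        s ^ (η1 * χ1 + χ1 * η1) * σ ^ (A1 * χ1 + A2 * η1) * r ^ η1 := by
      rw [hx_def, hy_def]; ring
    rw [this]
    have h1 : s ^ (η1 * χ1 + χ1 * η1) = 1 :=
      pm_pow_even hs ⟨η1 * χ1, by ring⟩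
    have h2 : σ ^ (A1 * χ1 + A2 * η1) = σ :=
      pm_pow_odd hσ (by rwa [add_comm] at hoddN)
    rw [h1, h2, one_mul]
    have hrp : 0 < r ^ η1 := pow_pos hr_pos _
    nlinarith
end
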